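/- Let $c > 1$ with $c < 2$, let $\gamma = 1/c$, and let $m$ be a positive integer. Then $\lfloor -m^{\gamma} \rfloor - \lfloor -(m+1)^{\gamma} \rfloor = 1$ if there exists a positive integer $n$ with $m = \lfloor n^c \rfloor$, and $\lfloor -m^{\gamma} \rfloor - \lfloor -(m+1)^{\gamma} \rfloor = 0$ otherwise. -/

import Mathlib

/-!
With `a = m^γ` and `b = (m+1)^γ`, the quantity is `⌈b⌉ - ⌈a⌉`. Since `t ↦ t^γ` is subadditive
(`0 < γ ≤ 1`), `b ≤ a + 1`, so `⌈b⌉ - ⌈a⌉` is `1` if some integer lies in `[a, b)` and `0` otherwise.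
Taking `c`-th powers, an integer `n ≥ 0` lies in `[a, b)` exactly when `m ≤ n^c < m + 1`, i.e.
`m = ⌊n^c⌋`; such an `n` is positive because `a > 0`.
-/

namespace Int

variable {R : Type*} [Ring R] [LinearOrder R] [FloorRing R] {a b : R}

lemma ceil_sub_ceil_eq_one_of_le_of_lt [IsOrderedRing R] (hb : b ≤ a + 1) {n : ℤ} (han : a ≤ n)
    (hnb : n < b) : ⌈b⌉ - ⌈a⌉ = 1 := by
  have hle : ⌈b⌉ ≤ ⌈a⌉ + 1 := by simpa using ceil_le_ceil hb
  have hlt : ⌈a⌉ < ⌈b⌉ := (ceil_le.mpr han).trans_lt (lt_ceil.mpr hnb)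
  omega

lemma ceil_sub_ceil_eq_zero_of_forall_le (hab : a ≤ b) (h : ∀ n : ℤ, a ≤ n → b ≤ n) :
    ⌈b⌉ - ⌈a⌉ = 0 := by
  have hle : ⌈b⌉ ≤ ⌈a⌉ := ceil_le.mpr (h _ (le_ceil a))
  have hge : ⌈a⌉ ≤ ⌈b⌉ := ceil_le_ceil hab
  omega

end Int

namespace Real

lemma floor_rpow_eq_natCast_iff {c x : ℝ} (hc : 0 < c) (hx : 0 ≤ x) (m : ℕ) :
    ⌊x ^ c⌋ = m ↔ (m : ℝ) ^ c⁻¹ ≤ x ∧ x < ((m : ℝ) + 1) ^ c⁻¹ := by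
  rw [Int.floor_eq_iff, rpow_inv_le_iff_of_pos m.cast_nonneg hx hc,
    lt_rpow_inv_iff_of_pos hx (by positivity) hc]
  push_cast
  rfl

end Real

theorem stmt4_general (c γ : ℝ) (hc : 1 < c) (hγ : γ = 1 / c)
    (m : ℕ) (hm : 0 < m) :
    ((∃ n : ℕ, 0 < n ∧ (m : ℤ) = ⌊(n : ℝ) ^ c⌋) →
        ⌊-((m : ℝ) ^ γ)⌋ - ⌊-(((m : ℝ) + 1) ^ γ)⌋ = 1) ∧
      ((¬∃ n : ℕ, 0 < n ∧ (m : ℤ) = ⌊(n : ℝ) ^ c⌋) →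
        ⌊-((m : ℝ) ^ γ)⌋ - ⌊-(((m : ℝ) + 1) ^ γ)⌋ = 0) := by
  have hc0 : 0 < c := one_pos.trans hc
  rw [hγ, one_div, Int.floor_neg, Int.floor_neg, neg_sub_neg]
  have hsub : ((m : ℝ) + 1) ^ c⁻¹ ≤ (m : ℝ) ^ c⁻¹ + 1 := by
    simpa using Real.rpow_add_le_add_rpow m.cast_nonneg zero_le_one (by positivity)
      (inv_le_one_of_one_le₀ hc.le)
  refine ⟨fun ⟨n, _, hmn⟩ => ?_, fun hnone => ?_⟩
  · obtain ⟨han, hnb⟩ := (Real.floor_rpow_eq_natCast_iff hc0 n.cast_nonneg m).mp hmn.symm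
    exact Int.ceil_sub_ceil_eq_one_of_le_of_lt hsub (n := n) (by simpa using han)
      (by simpa using hnb)
  · refine Int.ceil_sub_ceil_eq_zero_of_forall_le
      (Real.rpow_le_rpow m.cast_nonneg (by linarith) (by positivity)) fun k hk => ?_
    have hk0 : 0 < k := by
      have : (0 : ℝ) < m ^ c⁻¹ := by positivity
      exact_mod_cast this.trans_le hk
    lift k to ℕ using hk0.le
    by_contra! hkb
    push_cast at hk hkb
    exact hnone ⟨k, by omega,
      ((Real.floor_rpow_eq_natCast_iff hc0 k.cast_nonneg m).mpr ⟨hk, hkb⟩).symm⟩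

/-- For `1 < c < 2`, `γ = 1/c` and a positive integer `m`, the quantity
`⌊-m^γ⌋ - ⌊-(m+1)^γ⌋` equals `1` if `m = ⌊n^c⌋` for some positive integer `n`,
and equals `0` otherwise. -/
theorem stmt4 (c γ : ℝ) (hc : 1 < c) (hc2 : c < 2) (hγ : γ = 1 / c)
    (m : ℕ) (hm : 0 < m) :
    ((∃ n : ℕ, 0 < n ∧ (m : ℤ) = ⌊(n : ℝ) ^ c⌋) →
        ⌊-((m : ℝ) ^ γ)⌋ - ⌊-(((m : ℝ) + 1) ^ γ)⌋ = 1) ∧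
      ((¬∃ n : ℕ, 0 < n ∧ (m : ℤ) = ⌊(n : ℝ) ^ c⌋) →
        ⌊-((m : ℝ) ^ γ)⌋ - ⌊-(((m : ℝ) + 1) ^ γ)⌋ = 0) :=
  stmt4_general c γ hc hγ m hm
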